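/- Let Σ be a signed simple graph and κ a minimal proper coloration of Σ. Then the switching deficiency range of κ (the set of deficiencies def(κ*) over all colorations κ* switching equivalent to κ) equals the full integer interval [0, ⌊χ(Σ)/2⌋]. -/

import Mathlib

/-- A signed simple graph: two edge-disjoint simple graphs on the same vertex set,
the positive edges and the negative edges. -/
structure SignedGraph (V : Type*) where
  pos : SimpleGraph V
  neg : SimpleGraph V
  disjoint : ∀ a b : V, ¬ (pos.Adj a b ∧ neg.Adj a b)

/-- The color set of size `n`: `{±1, …, ±k}` if `n = 2k`, and `{0, ±1, …, ±k}` if `n = 2k+1`. -/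
noncomputable def signedColorSet (n : ℕ) : Finset ℤ :=
  if Even n then (Finset.Icc (-((n / 2 : ℕ) : ℤ)) ((n / 2 : ℕ) : ℤ)).erase 0
  else Finset.Icc (-((n / 2 : ℕ) : ℤ)) ((n / 2 : ℕ) : ℤ)

/-- A proper coloration of a signed graph using the color set of size `n`. -/
def IsProperColoration {V : Type*} (S : SignedGraph V) (n : ℕ) (κ : V → ℤ) : Prop :=
  (∀ v, κ v ∈ signedColorSet n) ∧
  (∀ a b, S.pos.Adj a b → κ a ≠ κ b) ∧
  (∀ a b, S.neg.Adj a b → κ a ≠ -κ b)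

/-- The chromatic number: the least size of a color set admitting a proper coloration. -/
noncomputable def sChromaticNumber {V : Type*} (S : SignedGraph V) : ℕ :=
  sInf {n : ℕ | ∃ κ : V → ℤ, IsProperColoration S n κ}

/-- A minimal coloration: a proper coloration using the color set of size `χ(Σ)`. -/
def IsMinimalColoration {V : Type*} (S : SignedGraph V) (κ : V → ℤ) : Prop :=
  IsProperColoration S (sChromaticNumber S) κ

/-- The deficiency of a coloration: the number of unused colors from the color set of size `n`. -/
noncomputable def sDeficiency {V : Type*} [Fintype V] (n : ℕ) (κ : V → ℤ) : ℕ :=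
  (signedColorSet n \ Finset.image κ Finset.univ).card

/-- Maximum deficiency over minimal colorations. -/
noncomputable def maxDef {V : Type*} [Fintype V] (S : SignedGraph V) : ℕ :=
  sSup {d : ℕ | ∃ κ : V → ℤ, IsMinimalColoration S κ ∧ sDeficiency (sChromaticNumber S) κ = d}

/-- Minimum deficiency over minimal colorations. -/
noncomputable def minDef {V : Type*} [Fintype V] (S : SignedGraph V) : ℕ :=
  sInf {d : ℕ | ∃ κ : V → ℤ, IsMinimalColoration S κ ∧ sDeficiency (sChromaticNumber S) κ = d}

/-- A stable cover of the positive edges: a vertex cover of `E⁺` that is stable in `Σ`. -/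
def IsStableCover {V : Type*} (S : SignedGraph V) (T : Set V) : Prop :=
  (∀ a b, S.pos.Adj a b → a ∈ T ∨ b ∈ T) ∧
  (∀ a ∈ T, ∀ b ∈ T, ¬ S.pos.Adj a b ∧ ¬ S.neg.Adj a b)

/-- An edge `ab` has exactly one endpoint in `A`. -/
def crossing {V : Type*} (A : Set V) (a b : V) : Prop := ¬ ((a ∈ A) ↔ (b ∈ A))

/-- Switching a signed graph at a vertex set `A`: the sign of every edge with exactly one
endpoint in `A` is negated. -/
def SignedGraph.switch {V : Type*} (S : SignedGraph V) (A : Set V) : SignedGraph V where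
  pos :=
    { Adj := fun a b => (S.pos.Adj a b ∧ ¬ crossing A a b) ∨ (S.neg.Adj a b ∧ crossing A a b)
      symm := by
        constructor
        intro a b h
        unfold crossing at *
        rcases h with ⟨h1, h2⟩ | ⟨h1, h2⟩
        · exact Or.inl ⟨S.pos.adj_symm h1, by tauto⟩
        · exact Or.inr ⟨S.neg.adj_symm h1, by tauto⟩
      loopless := by
        constructor
        intro a h
        rcases h with ⟨h1, _⟩ | ⟨_, h2⟩
        · exact S.pos.irrefl h1
        · exact h2 Iff.rfl }
  neg :=
    { Adj := fun a b => (S.neg.Adj a b ∧ ¬ crossing A a b) ∨ (S.pos.Adj a b ∧ crossing A a b)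
      symm := by
        constructor
        intro a b h
        unfold crossing at *
        rcases h with ⟨h1, h2⟩ | ⟨h1, h2⟩
        · exact Or.inl ⟨S.neg.adj_symm h1, by tauto⟩
        · exact Or.inr ⟨S.pos.adj_symm h1, by tauto⟩
      loopless := by
        constructor
        intro a h
        rcases h with ⟨h1, _⟩ | ⟨_, h2⟩
        · exact S.neg.irrefl h1
        · exact h2 Iff.rfl }
  disjoint := by
    intro a b h
    have := S.disjoint a b
    tauto

/-- General proper coloration with an arbitrary color set `C ⊆ ℤ`. -/
def IsProperWith {V : Type*} (S : SignedGraph V) (C : Set ℤ) (κ : V → ℤ) : Prop :=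
  (∀ v, κ v ∈ C) ∧
  (∀ a b, S.pos.Adj a b → κ a ≠ κ b) ∧
  (∀ a b, S.neg.Adj a b → κ a ≠ -κ b)

open Classical in
/-- The coloration switching equivalent to `κ` via `A`: negate the colors on `A`. -/
noncomputable def switchColor {V : Type*} (A : Set V) (κ : V → ℤ) : V → ℤ :=
  fun v => if v ∈ A then -κ v else κ v

/-- The adjacency of the forcing graph `F(Σ)` for the matching `m`:
a directed edge from `x` to `y` whenever `x ȳ` is a negative edge. -/
def ForcingAdj {V : Type*} (S : SignedGraph V) (m : V → V) (x y : V) : Prop :=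
  S.neg.Adj x (m y)

/-!
Switching negates the colors on a vertex set, so the colorations switching equivalent to `κ` are
exactly the `τ` with `|τ| = |κ|`. Minimality of `κ` forces every magnitude class
`{u | |κ u| = j}`, `1 ≤ j ≤ ⌊χ/2⌋`, to have at least two vertices, and the class of `0` to be
nonempty when `χ` is odd: an empty class can be compressed away, and a singleton class `{v}` can
be absorbed by recoloring `v` with `0` (`χ` even) or the `0` class with `±κ v` (`χ` odd), each
time saving a color. Hence a switching of `κ` misses at most one color of each pair `±j`, and
giving one vertex of each class `j > d` the color `-j` and every other vertex `|κ|` misses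
exactly `-1, …, -d`.
-/

open Finset

section

variable {V : Type*} {S : SignedGraph V} {n : ℕ} {κ : V → ℤ}

theorem mem_signedColorSet {c : ℤ} :
    c ∈ signedColorSet n ↔ (n % 2 = 0 → c ≠ 0) ∧ c.natAbs ≤ n / 2 := by
  unfold signedColorSet
  split_ifs with h <;> rw [Nat.even_iff] at h <;> simp only [mem_erase, mem_Icc] <;> omega

theorem sChromaticNumber_le {m : ℕ} (h : IsProperColoration S m κ) : sChromaticNumber S ≤ m :=
  Nat.sInf_le ⟨κ, h⟩

theorem IsProperColoration.pred_of_forall_ne_zero (hκ : IsProperColoration S n κ)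
    (hn : n % 2 = 1) (h0 : ∀ v, κ v ≠ 0) : IsProperColoration S (n - 1) κ := by
  refine ⟨fun v => ?_, hκ.2⟩
  have := mem_signedColorSet.1 (hκ.1 v)
  have := h0 v
  rw [mem_signedColorSet]
  omega

theorem IsMinimalColoration.exists_eq_zero (hκ : IsMinimalColoration S κ)
    (hn : sChromaticNumber S % 2 = 1) : ∃ v, κ v = 0 := by
  by_contra! h0
  have := sChromaticNumber_le (IsProperColoration.pred_of_forall_ne_zero hκ hn h0)
  omega

theorem IsProperColoration.update_zero [DecidableEq V] (hκ : IsProperColoration S n κ)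
    (hn : n % 2 = 0) (v : V) : IsProperColoration S (n + 1) (Function.update κ v 0) := by
  obtain ⟨hcol, hpos, hneg⟩ := hκ
  have hb := fun u => mem_signedColorSet.1 (hcol u)
  refine ⟨fun u => ?_, fun a b hab => ?_, fun a b hab => ?_⟩
  · have := hb u
    rw [mem_signedColorSet, Function.update_apply]
    split_ifs <;> omega
  · have := hb a; have := hb b; have := hpos a b hab
    simp only [Function.update_apply]
    split_ifs with ha hb' <;> first | omega | exact absurd (ha.trans hb'.symm) hab.ne
  · have := hb a; have := hb b; have := hneg a b hab
    simp only [Function.update_apply]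
    split_ifs with ha hb' <;> first | omega | exact absurd (ha.trans hb'.symm) hab.ne

/-- Colors `c` with `i < |c|` move one step towards `0`, freeing the unused pair `±i`. -/
theorem IsProperColoration.exists_sub_two (hκ : IsProperColoration S n κ) {i : ℕ} (hi : 1 ≤ i)
    (hin : i ≤ n / 2) (hmiss : ∀ v, (κ v).natAbs ≠ i) :
    ∃ κ' : V → ℤ, IsProperColoration S (n - 2) κ' := by
  obtain ⟨hcol, hpos, hneg⟩ := hκ
  have hb := fun u => mem_signedColorSet.1 (hcol u)
  let g : ℤ → ℤ := fun c => if (i : ℤ) < c then c - 1 else if c < -i then c + 1 else c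
  refine ⟨fun v => g (κ v), fun v => ?_, fun a b hab => ?_, fun a b hab => ?_⟩
  · have := hb v; have := hmiss v
    rw [mem_signedColorSet]
    simp only [g]
    split_ifs <;> omega
  · have := hb a; have := hb b; have := hmiss a; have := hmiss b; have := hpos a b hab
    simp only [g]
    split_ifs <;> omega
  · have := hb a; have := hb b; have := hmiss a; have := hmiss b; have := hneg a b hab
    simp only [g]
    split_ifs <;> omega

/-- If `v` is the only vertex of its color magnitude, the color-`0` class (which is stable)
can be recolored with `±κ v`, choosing for each vertex the sign that avoids a conflict with `v`. -/
theorem IsProperColoration.exists_forall_ne_zero (hκ : IsProperColoration S n κ) {v : V}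
    (hv : κ v ≠ 0) (huniq : ∀ u, (κ u).natAbs = (κ v).natAbs → u = v) :
    ∃ κ' : V → ℤ, IsProperColoration S n κ' ∧ ∀ u, κ' u ≠ 0 := by
  classical
  obtain ⟨hcol, hpos, hneg⟩ := hκ
  have hκv := mem_signedColorSet.1 (hcol v)
  let κ' : V → ℤ := fun u => if κ u = 0 then (if S.pos.Adj u v then -κ v else κ v) else κ u
  have hfix : ∀ {u}, κ u ≠ 0 → κ' u = κ u := fun h => if_neg h
  have hpos_zero : ∀ a b, S.pos.Adj a b → κ a = 0 → κ' a ≠ κ' b := by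
    intro a b hab ha
    have hb0 : κ b ≠ 0 := fun hb => hpos a b hab (ha.trans hb.symm)
    rw [hfix hb0]
    by_cases hbv : b = v
    · subst hbv
      simp only [κ', ha, hab, if_true]
      omega
    · have := mt (huniq b) hbv
      simp only [κ', ha, if_true]
      split_ifs <;> omega
  have hneg_zero : ∀ a b, S.neg.Adj a b → κ a = 0 → κ' a ≠ -κ' b := by
    intro a b hab ha
    have hb0 : κ b ≠ 0 := fun hb => hneg a b hab (by rw [ha, hb, neg_zero])
    rw [hfix hb0]
    by_cases hbv : b = v
    · subst hbv
      simp only [κ', ha, if_true, if_neg fun hp => S.disjoint a b ⟨hp, hab⟩]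
      omega
    · have := mt (huniq b) hbv
      simp only [κ', ha, if_true]
      split_ifs <;> omega
  refine ⟨κ', ⟨fun u => ?_, fun a b hab => ?_, fun a b hab => ?_⟩, fun u => ?_⟩
  · have := hcol u
    simp only [κ']
    split_ifs <;> first | assumption | (rw [mem_signedColorSet]; omega)
  · by_cases ha : κ a = 0
    · exact hpos_zero a b hab ha
    by_cases hb : κ b = 0
    · exact (hpos_zero b a hab.symm hb).symm
    rw [hfix ha, hfix hb]
    exact hpos a b hab
  · by_cases ha : κ a = 0
    · exact hneg_zero a b hab ha
    by_cases hb : κ b = 0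
    · have := hneg_zero b a hab.symm hb
      omega
    rw [hfix ha, hfix hb]
    exact hneg a b hab
  · simp only [κ']
    split_ifs <;> omega

theorem IsMinimalColoration.exists_ne_natAbs_eq (hκ : IsMinimalColoration S κ) {i : ℕ}
    (hi : 1 ≤ i) (hin : i ≤ sChromaticNumber S / 2) :
    ∃ u w, u ≠ w ∧ (κ u).natAbs = i ∧ (κ w).natAbs = i := by
  classical
  by_contra! hsmall
  by_cases hmiss : ∀ v, (κ v).natAbs ≠ i
  · obtain ⟨κ', h'⟩ := IsProperColoration.exists_sub_two hκ hi hin hmiss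
    have := sChromaticNumber_le h'
    omega
  obtain ⟨v, hv⟩ := not_forall_not.1 hmiss
  have huniq : ∀ u, (κ u).natAbs = (κ v).natAbs → u = v :=
    fun u hu => by_contra fun h => hsmall u v h (hu.trans hv) hv
  rcases Nat.mod_two_eq_zero_or_one (sChromaticNumber S) with heven | hodd
  · obtain ⟨κ', h'⟩ := (IsProperColoration.update_zero hκ heven v).exists_sub_two hi
      (by omega) fun u => by
        rw [Function.update_apply]
        split_ifs with hu
        · omega
        · exact fun h => hu (huniq u (h.trans hv.symm))
    have := sChromaticNumber_le h'
    omega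
  · obtain ⟨κ', h', h0⟩ := IsProperColoration.exists_forall_ne_zero hκ (v := v) (by omega) huniq
    have := sChromaticNumber_le (h'.pred_of_forall_ne_zero hodd h0)
    omega

theorem natAbs_switchColor (A : Set V) (κ : V → ℤ) (v : V) :
    (switchColor A κ v).natAbs = (κ v).natAbs := by
  unfold switchColor
  split_ifs <;> simp

theorem switchColor_setOf_ne {τ : V → ℤ} (h : ∀ v, (τ v).natAbs = (κ v).natAbs) :
    switchColor {v | τ v ≠ κ v} κ = τ := by
  funext v
  have := h v
  unfold switchColor
  simp only [Set.mem_ofPred_eq]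
  split_ifs <;> omega

theorem ne_zero_of_forall_ne {τ : V → ℤ} {c : ℤ} (hc : c ∈ signedColorSet n)
    (h0 : n % 2 = 1 → ∃ v, τ v = 0) (hmiss : ∀ v, τ v ≠ c) : c ≠ 0 := by
  rintro rfl
  rcases Nat.mod_two_eq_zero_or_one n with hn | hn
  · exact (mem_signedColorSet.1 hc).1 hn rfl
  · obtain ⟨v, hv⟩ := h0 hn
    exact hmiss v hv

variable [Fintype V]

theorem sDeficiency_le {τ : V → ℤ} (h0 : n % 2 = 1 → ∃ v, τ v = 0)
    (hocc : ∀ j, 1 ≤ j → j ≤ n / 2 → ∃ v, (τ v).natAbs = j) : sDeficiency n τ ≤ n / 2 := by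
  have hmaps : Set.MapsTo Int.natAbs ↑(signedColorSet n \ image τ univ) ↑(Icc 1 (n / 2)) := by
    intro c hc
    simp only [coe_sdiff, Set.mem_sdiff, mem_coe, coe_image, coe_univ, Set.image_univ,
      Set.mem_range, not_exists] at hc
    have hc0 := ne_zero_of_forall_ne hc.1 h0 hc.2
    have := (mem_signedColorSet.1 hc.1).2
    simp only [coe_Icc, Set.mem_Icc]
    omega
  have hinj : Set.InjOn Int.natAbs ↑(signedColorSet n \ image τ univ) := by
    intro c hc c' hc' hcc'
    have hj := hmaps hc
    simp only [coe_Icc, Set.mem_Icc] at hj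
    obtain ⟨v, hv⟩ := hocc c.natAbs hj.1 hj.2
    simp only [coe_sdiff, Set.mem_sdiff, coe_image, coe_univ, Set.image_univ, Set.mem_range,
      not_exists] at hc hc'
    have := hc.2 v
    have := hc'.2 v
    omega
  unfold sDeficiency
  simpa using card_le_card_of_injOn _ hmaps hinj

theorem exists_natAbs_eq_sDeficiency_eq (h0 : n % 2 = 1 → ∃ v, κ v = 0)
    (hpair : ∀ j, 1 ≤ j → j ≤ n / 2 → ∃ u w, u ≠ w ∧ (κ u).natAbs = j ∧ (κ w).natAbs = j)
    {d : ℕ} (hd : d ≤ n / 2) :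
    ∃ τ : V → ℤ, (∀ v, (τ v).natAbs = (κ v).natAbs) ∧ sDeficiency n τ = d := by
  classical
  rcases Nat.eq_zero_or_pos (n / 2) with hk | hk
  · refine ⟨κ, fun _ => rfl, ?_⟩
    have := sDeficiency_le h0 fun j h1 h2 =>
      (hpair j h1 h2).imp fun u ⟨_, _, hu, _⟩ => hu
    omega
  have : Nonempty V := ⟨(hpair 1 le_rfl hk).choose⟩
  choose! u w huw hu hw using hpair
  let τ : V → ℤ := fun x =>
    if d < (κ x).natAbs ∧ x = w (κ x).natAbs then -((κ x).natAbs : ℤ) else (κ x).natAbs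
  refine ⟨τ, fun x => by simp only [τ]; split_ifs <;> omega, ?_⟩
  suffices hsdiff : signedColorSet n \ image τ univ = Icc (-(d : ℤ)) (-1) by
    simp [sDeficiency, hsdiff]
  ext c
  simp only [mem_sdiff, mem_image, mem_univ, true_and, not_exists, mem_Icc]
  constructor
  · rintro ⟨hcn, hmiss⟩
    have hc0 := ne_zero_of_forall_ne hcn (fun hn => (h0 hn).imp fun z hz => by simp [τ, hz]) hmiss
    replace hcn := (mem_signedColorSet.1 hcn).2
    have hpos : ¬ 0 < c := fun hc => by
      have hj := hu c.natAbs (by omega) (by omega)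
      have hne := huw c.natAbs (by omega) (by omega)
      refine hmiss (u c.natAbs) ?_
      simp only [τ, hj, hne, and_false, if_false]
      omega
    have hlow : ¬ c < -d := fun hc => by
      have hj := hw c.natAbs (by omega) (by omega)
      refine hmiss (w c.natAbs) ?_
      simp only [τ, hj, show d < c.natAbs by omega, true_and, if_true]
      omega
    omega
  · rintro ⟨hdc, hc⟩
    refine ⟨mem_signedColorSet.2 ⟨fun _ => by omega, by omega⟩, fun x => ?_⟩
    simp only [τ]
    split_ifs <;> omega

end

/-- The switching deficiency range of a minimal coloration `κ` is the
full integer interval `[0, ⌊χ(Σ)/2⌋]`. -/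
theorem switching_deficiency_range {V : Type*} [Fintype V] (S : SignedGraph V)
    (κ : V → ℤ) (hκ : IsMinimalColoration S κ) :
    {d : ℕ | ∃ A : Set V, sDeficiency (sChromaticNumber S) (switchColor A κ) = d} =
      Set.Icc 0 (sChromaticNumber S / 2) := by
  have hpair := fun j (h1 : 1 ≤ j) h2 => hκ.exists_ne_natAbs_eq h1 h2
  ext d
  constructor
  · rintro ⟨A, rfl⟩
    refine ⟨Nat.zero_le _, sDeficiency_le (fun hodd => ?_) fun j h1 h2 => ?_⟩
    · obtain ⟨v, hv⟩ := hκ.exists_eq_zero hodd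
      exact ⟨v, Int.natAbs_eq_zero.1 ((natAbs_switchColor A κ v).trans (by rw [hv]; rfl))⟩
    · obtain ⟨u, -, -, hu, -⟩ := hpair j h1 h2
      exact ⟨u, (natAbs_switchColor A κ u).trans hu⟩
  · rintro ⟨-, hd⟩
    obtain ⟨τ, hτ, rfl⟩ := exists_natAbs_eq_sDeficiency_eq hκ.exists_eq_zero hpair hd
    exact ⟨_, by rw [switchColor_setOf_ne hτ]⟩
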